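/- arXiv:1401.4922 — 4 statements merged into one kernel-verified Lean document; each statement's English description precedes it below -/
import Mathlib

section
/- Let g be strictly increasing and concave with g(0)=0, g(1)=1, and suppose g(r) ≥ r for r ∈ [0,1]. Let V : [0,T] → ℝ be continuous and positive, A > 0, 1 < q < 2, and suppose n, s : [0,T] → ℝ satisfy s' (t) = (g(A n(t) s(t)^(q/2))/n(t))·V(t), n(t) ≥ n̲ > 0, s(0) > 0, and A n(t) s(t)^(q/2) ≤ 1 for all t. Then s(T)^(1-q/2) ≥ s(0)^(1-q/2) + A(1-q/2)·∫₀^T V(u) du, and s(T) ≤ (A n̲)^(-2/q). Consequently, if ∫₀^T V(u) du > ((A n̲)^(-(2/q))(1-q/2) - s(0)^(1-q/2))/(A(1-q/2)), the constraints cannot be satisfied on all of [0,T]. -/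
/-!
Along a trajectory the constraint `r ≤ 1` and `g r ≥ r` give `s' = g(r) V / n ≥ r V / n = A s^(q/2) V`,
so `d/dt s^(1-q/2) = (1-q/2) s^(-q/2) s' ≥ A (1-q/2) V`; integrating over `[0,T]` gives the lower bound.
The upper bound is just the constraint `A n̲ s^(q/2) ≤ A n s^(q/2) ≤ 1` at `t = T`.
-/

open Set MeasureTheory

theorem le_rpow_neg_inv_of_mul_rpow_le_one {c x p : ℝ} (hc : 0 < c) (hx : 0 ≤ x) (hp : 0 < p)
    (h : c * x ^ p ≤ 1) : x ≤ c ^ (-p⁻¹) := by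
  rw [Real.rpow_neg hc.le, ← Real.inv_rpow hc.le,
    Real.le_rpow_inv_iff_of_pos hx (inv_nonneg.2 hc.le) hp, ← one_div, le_div_iff₀' hc]
  exact h

theorem rpow_add_integral_le_of_rpow_mul_le_deriv {s s' V : ℝ → ℝ} {a b c p : ℝ} (hab : a ≤ b)
    (hp : p ≤ 1) (hs : ∀ t ∈ Icc a b, 0 < s t) (hderiv : ∀ t ∈ Icc a b, HasDerivAt s (s' t) t)
    (hV : IntegrableOn V (Icc a b)) (hrate : ∀ t ∈ Ioo a b, c * V t * s t ^ p ≤ s' t) :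
    s a ^ (1 - p) + c * (1 - p) * ∫ u in a..b, V u ≤ s b ^ (1 - p) := by
  have hpow : ∀ t ∈ Icc a b,
      HasDerivAt (fun x => s x ^ (1 - p)) (s' t * (1 - p) * s t ^ (-p)) t := fun t ht => by
    simpa using (hderiv t ht).rpow_const (p := 1 - p) (Or.inl (hs t ht).ne')
  have := intervalIntegral.integral_le_sub_of_hasDeriv_right_of_le hab
    (fun t ht => (hpow t ht).continuousAt.continuousWithinAt)
    (fun t ht => (hpow t (Ioo_subset_Icc_self ht)).hasDerivWithinAt) (hV.const_mul (c * (1 - p)))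
    (fun t ht => by
      have hst := hs t (Ioo_subset_Icc_self ht)
      calc c * (1 - p) * V t = c * V t * s t ^ p * ((1 - p) * s t ^ (-p)) := by
            rw [Real.rpow_neg hst.le]; field_simp
        _ ≤ s' t * ((1 - p) * s t ^ (-p)) := by
          have h1p : 0 ≤ 1 - p := sub_nonneg.2 hp
          gcongr
          exact hrate t ht
        _ = s' t * (1 - p) * s t ^ (-p) := by ring)
  rw [intervalIntegral.integral_const_mul] at this
  linarith

theorem mul_rpow_mul_le_div_mul {g : ℝ → ℝ} (hgr : ∀ r ∈ Icc (0 : ℝ) 1, r ≤ g r) {A n x v p : ℝ}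
    (hA : 0 ≤ A) (hn : 0 < n) (hx : 0 ≤ x) (hv : 0 ≤ v) (hr : A * n * x ^ p ≤ 1) :
    A * v * x ^ p ≤ g (A * n * x ^ p) / n * v := by
  have := hgr _ ⟨by positivity, hr⟩
  calc A * v * x ^ p = A * n * x ^ p / n * v := by field_simp
    _ ≤ _ := by gcongr

theorem stmt3_general (g : ℝ → ℝ) (V n s : ℝ → ℝ) (A q T nlow : ℝ)
    (hA : 0 < A) (hq1 : 1 < q) (hq2 : q < 2) (hT : 0 < T) (hnlow : 0 < nlow)
    (hgr : ∀ r ∈ Set.Icc (0:ℝ) 1, r ≤ g r)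
    (hV : ContinuousOn V (Set.Icc 0 T))
    (hVpos : ∀ t ∈ Set.Icc (0:ℝ) T, 0 < V t)
    (hspos : ∀ t ∈ Set.Icc (0:ℝ) T, 0 < s t)
    (hode : ∀ t ∈ Set.Icc (0:ℝ) T,
      HasDerivAt s (g (A * n t * s t ^ (q / 2)) / n t * V t) t)
    (hnge : ∀ t ∈ Set.Icc (0:ℝ) T, nlow ≤ n t)
    (hrdi : ∀ t ∈ Set.Icc (0:ℝ) T, A * n t * s t ^ (q / 2) ≤ 1) :
    s 0 ^ (1 - q / 2) + A * (1 - q / 2) * ∫ u in (0:ℝ)..T, V u ≤ s T ^ (1 - q / 2)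
    ∧ s T ≤ (A * nlow) ^ (-(2 / q)) := by
  constructor
  · refine rpow_add_integral_le_of_rpow_mul_le_deriv hT.le (by linarith) hspos hode
      hV.integrableOn_Icc fun t ht => ?_
    have ht' := Ioo_subset_Icc_self ht
    exact mul_rpow_mul_le_div_mul hgr hA.le (hnlow.trans_le (hnge t ht')) (hspos t ht').le
      (hVpos t ht').le (hrdi t ht')
  · have hTmem : T ∈ Icc 0 T := right_mem_Icc.2 hT.le
    have hsT := hspos T hTmem
    rw [← inv_div]
    refine le_rpow_neg_inv_of_mul_rpow_le_one (mul_pos hA hnlow) hsT.le (by linarith) ?_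
    calc A * nlow * s T ^ (q / 2) ≤ A * n T * s T ^ (q / 2) := by
          gcongr
          exact hnge T hTmem
      _ ≤ 1 := hrdi T hTmem

/-- Lower bound on the growth of the basal area and the upper bound
`s T ≤ (A n̲)^(-2/q)` forced by the constraints of the forest growth model. -/
theorem stmt3 (g : ℝ → ℝ) (V n s : ℝ → ℝ) (A q T nlow : ℝ)
    (hA : 0 < A) (hq1 : 1 < q) (hq2 : q < 2) (hT : 0 < T) (hnlow : 0 < nlow)
    (hgmono : StrictMonoOn g (Set.Ici 0))
    (hgconc : ConcaveOn ℝ (Set.Ici 0) g)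
    (hg0 : g 0 = 0) (hg1 : g 1 = 1)
    (hgr : ∀ r ∈ Set.Icc (0:ℝ) 1, r ≤ g r)
    (hV : ContinuousOn V (Set.Icc 0 T))
    (hVpos : ∀ t ∈ Set.Icc (0:ℝ) T, 0 < V t)
    (hspos : ∀ t ∈ Set.Icc (0:ℝ) T, 0 < s t)
    (hs0 : 0 < s 0)
    (hode : ∀ t ∈ Set.Icc (0:ℝ) T,
      HasDerivAt s (g (A * n t * s t ^ (q / 2)) / n t * V t) t)
    (hnge : ∀ t ∈ Set.Icc (0:ℝ) T, nlow ≤ n t)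
    (hrdi : ∀ t ∈ Set.Icc (0:ℝ) T, A * n t * s t ^ (q / 2) ≤ 1) :
    s 0 ^ (1 - q / 2) + A * (1 - q / 2) * ∫ u in (0:ℝ)..T, V u ≤ s T ^ (1 - q / 2)
    ∧ s T ≤ (A * nlow) ^ (-(2 / q)) :=
  stmt3_general g V n s A q T nlow hA hq1 hq2 hT hnlow hgr hV hVpos hspos hode hnge hrdi
end

section
/- Let g satisfy (H2) and let (n,s) solve ds/dt = (g(r(n,s))/n)V(t), dn/dt = -e(t) with 0 ≤ e(t), V(t) > 0, n(t) > 0, s(t) > 0. Then t ↦ g(r(n(t),s(t)))/n(t) is nondecreasing in t. More precisely, d/dt [g(r(n(t),s(t)))/n(t)] = (g'(r) r'_s / n)·(ds/dt) + G(r)·(g(r)²/n²)·e(t) ≥ 0, where G(r) = (g(r) - r g'(r))/g(r)² > 0 by concavity of g. -/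
/-!
Write `r = n ρ(s)` with `ρ(s) = A s^(q/2)`. Since `r` is linear in `n`, the chain and quotient
rules give
`d/dt [g(r)/n] = g'(r) ρ'(s) s' + e (g(r) - r g'(r)) / n²`.
The first term is nonnegative because `g` and `ρ` are increasing and `s' ≥ 0`; the second because
concavity of `g` with `g 0 = 0` puts the tangent line at `r` above the origin: `r g'(r) ≤ g(r)`.
-/

open Set

theorem ConcaveOn.deriv_mul_le_of_map_zero {g : ℝ → ℝ} {g' r : ℝ}
    (hg : ConcaveOn ℝ (Ici 0) g) (hg0 : g 0 = 0) (hr : 0 < r) (hd : HasDerivAt g g' r) :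
    g' * r ≤ g r := by
  have hslope := hg.le_slope_of_hasDerivAt self_mem_Ici hr.le hr hd
  rw [slope_def_field, hg0, sub_zero, sub_zero] at hslope
  exact (le_div_iff₀ hr).mp hslope

theorem monotoneOn_of_hasDerivAt_nonneg {D : Set ℝ} (hD : Convex ℝ D) {f f' : ℝ → ℝ}
    (hf : ∀ x ∈ D, HasDerivAt f (f' x) x) (hf' : ∀ x ∈ D, 0 ≤ f' x) : MonotoneOn f D :=
  monotoneOn_of_hasDerivWithinAt_nonneg hD (fun x hx => (hf x hx).continuousAt.continuousWithinAt)
    (fun x hx => (hf x (interior_subset hx)).hasDerivWithinAt)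
    (fun x hx => hf' x (interior_subset hx))

theorem hasDerivAt_comp_mul_div {g ρ N S : ℝ → ℝ} {g' ρ' S' E t : ℝ}
    (hN : HasDerivAt N (-E) t) (hS : HasDerivAt S S' t) (hρ : HasDerivAt ρ ρ' (S t))
    (hg : HasDerivAt g g' (N t * ρ (S t))) (hN0 : N t ≠ 0) :
    HasDerivAt (fun τ => g (N τ * ρ (S τ)) / N τ)
      (g' * ρ' * S' + E * (g (N t * ρ (S t)) - N t * ρ (S t) * g') / N t ^ 2) t := by
  refine ((hg.comp t (hN.mul (hρ.comp t hS))).div hN hN0).congr_deriv ?_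
  simp only [Function.comp_apply, Pi.mul_apply]
  field_simp
  ring

theorem stmt6_general (g g' : ℝ → ℝ) (V n s e : ℝ → ℝ) (A q T : ℝ)
    (hA : 0 < A) (hq1 : 1 < q)
    (hgderiv : ∀ r ∈ Set.Ioi (0:ℝ), HasDerivAt g (g' r) r)
    (hg'pos : ∀ r ∈ Set.Ioi (0:ℝ), 0 < g' r)
    (hgconc : ConcaveOn ℝ (Set.Ici 0) g)
    (hg0 : g 0 = 0)
    (hnpos : ∀ t ∈ Set.Icc (0:ℝ) T, 0 < n t)
    (hspos : ∀ t ∈ Set.Icc (0:ℝ) T, 0 < s t)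
    (hVpos : ∀ t ∈ Set.Icc (0:ℝ) T, 0 < V t)
    (he : ∀ t ∈ Set.Icc (0:ℝ) T, 0 ≤ e t)
    (hs : ∀ t ∈ Set.Icc (0:ℝ) T,
      HasDerivAt s (g (A * n t * s t ^ (q / 2)) / n t * V t) t)
    (hn : ∀ t ∈ Set.Icc (0:ℝ) T, HasDerivAt n (-(e t)) t) :
    MonotoneOn (fun t => g (A * n t * s t ^ (q / 2)) / n t) (Set.Icc 0 T) := by
  set ρ : ℝ → ℝ := fun x => A * x ^ (q / 2)
  have hr_eq : ∀ t, A * n t * s t ^ (q / 2) = n t * ρ (s t) := fun t => by simp only [ρ]; ring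
  simp only [hr_eq] at hs ⊢
  have hr : ∀ t ∈ Icc 0 T, 0 < n t * ρ (s t) := fun t ht =>
    mul_pos (hnpos t ht) (mul_pos hA (Real.rpow_pos_of_pos (hspos t ht) _))
  have hρ : ∀ t ∈ Icc 0 T, HasDerivAt ρ (A * (q / 2 * s t ^ (q / 2 - 1))) (s t) := fun t ht =>
    (Real.hasDerivAt_rpow_const (Or.inl (hspos t ht).ne')).const_mul A
  refine monotoneOn_of_hasDerivAt_nonneg (convex_Icc 0 T) (fun t ht =>
    hasDerivAt_comp_mul_div (hn t ht) (hs t ht) (hρ t ht) (hgderiv _ (hr t ht))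
      (hnpos t ht).ne') fun t ht => ?_
  have hr_t := hr t ht
  have htangent := hgconc.deriv_mul_le_of_map_zero hg0 hr_t (hgderiv _ hr_t)
  have hg'r := hg'pos _ hr_t
  have hgr : 0 < g (n t * ρ (s t)) := (mul_pos hg'r hr_t).trans_le htangent
  have hgap : 0 ≤ g (n t * ρ (s t)) - n t * ρ (s t) * g' (n t * ρ (s t)) := by linarith
  have hq : 0 < q := by linarith
  have := hnpos t ht
  have := hspos t ht
  have := hVpos t ht
  have := he t ht
  positivity

/-- Under (H2), along any solution of the system
`s' = (g(r(n,s))/n) V`, `n' = -e` with `e ≥ 0`, `V > 0`, the function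
`t ↦ g(r(n(t),s(t)))/n(t)` is nondecreasing in `t`. -/
theorem stmt6 (g g' : ℝ → ℝ) (V n s e : ℝ → ℝ) (A q T : ℝ)
    (hA : 0 < A) (hq1 : 1 < q) (hq2 : q < 2) (hT : 0 < T)
    (hgderiv : ∀ r ∈ Set.Ioi (0:ℝ), HasDerivAt g (g' r) r)
    (hg'pos : ∀ r ∈ Set.Ioi (0:ℝ), 0 < g' r)
    (hgconc : ConcaveOn ℝ (Set.Ici 0) g)
    (hg0 : g 0 = 0)
    (hgpos : ∀ r ∈ Set.Ioi (0:ℝ), 0 < g r)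
    (hnpos : ∀ t ∈ Set.Icc (0:ℝ) T, 0 < n t)
    (hspos : ∀ t ∈ Set.Icc (0:ℝ) T, 0 < s t)
    (hVpos : ∀ t ∈ Set.Icc (0:ℝ) T, 0 < V t)
    (he : ∀ t ∈ Set.Icc (0:ℝ) T, 0 ≤ e t)
    (hs : ∀ t ∈ Set.Icc (0:ℝ) T,
      HasDerivAt s (g (A * n t * s t ^ (q / 2)) / n t * V t) t)
    (hn : ∀ t ∈ Set.Icc (0:ℝ) T, HasDerivAt n (-(e t)) t) :
    MonotoneOn (fun t => g (A * n t * s t ^ (q / 2)) / n t) (Set.Icc 0 T) :=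
  stmt6_general g g' V n s e A q T hA hq1 hgderiv hg'pos hgconc hg0 hnpos hspos hVpos he hs hn
end

section
/- (Monotone invariant combinations, upper/lower regime.) Let g satisfy (H2) and (H4): there are 0 < γ̲ ≤ γ̄ < 1 with γ̲ ≤ r g'(r)/g(r) ≤ γ̄ for r ∈ (0,1). Let 0 < b < (1 - (q/2)γ̄)/(1 - γ̲) and choose a with 1 - γ̲ < a < min((1 - (q/2)γ̄)/b, 1). Then along any solution of s' = (g(A n s^(q/2))/n)V(t), n' = -e(t) with 0 ≤ e and V > 0, the function y(n,s) = d/dt[(n s^b)^a], viewed as a function of (n,s) with the control fixed, satisfies ∂y/∂n > 0 and ∂y/∂s < 0. -/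
/-!
Write `r = A n s^(q/2)`. Differentiating `x^p g(c x^m)` gives `x^(p-1) (p g(r) + m r g'(r))`, so
`∂y/∂n` is a positive multiple of `(a-1) g(r) + r g'(r) ≥ (a-1+γ̲) g(r) > 0` plus the
nonnegative term `(1-a) a e n^(a-2) s^(ab)`, while `∂y/∂s` is a positive multiple of
`(ab-1) g(r) + (q/2) r g'(r) ≤ (ab-1+(q/2)γ̄) g(r) < 0` minus the nonnegative term
`a² b e n^(a-1) s^(ab-1)`.
-/

open Real

/-- The paper's `y(n,s) = d/dt[(n s^b)^a]` with the control `(V, e)` frozen. -/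
noncomputable def invariantRate (g : ℝ → ℝ) (A q a b V e n s : ℝ) : ℝ :=
  a * b * n ^ (a - 1) * s ^ (a * b - 1) * g (A * n * s ^ (q / 2)) * V
    - a * e * n ^ (a - 1) * s ^ (a * b)

theorem hasDerivAt_rpow_mul_comp_mul_rpow {g : ℝ → ℝ} {d c p m x : ℝ} (hx : 0 < x)
    (hg : HasDerivAt g d (c * x ^ m)) :
    HasDerivAt (fun y => y ^ p * g (c * y ^ m))
      (x ^ (p - 1) * (p * g (c * x ^ m) + m * (c * x ^ m) * d)) x := by
  have hpow := hasDerivAt_rpow_const (p := p) (Or.inl hx.ne')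
  have hinner := (hasDerivAt_rpow_const (p := m) (Or.inl hx.ne')).const_mul c
  refine (hpow.mul (hg.comp x hinner)).congr_deriv ?_
  rw [Function.comp_apply, rpow_sub_one hx.ne', rpow_sub_one hx.ne']
  field_simp

section invariantRate

variable {g : ℝ → ℝ} {A q a b V e n s d : ℝ}

theorem hasDerivAt_invariantRate_fst (hn : 0 < n) (hg : HasDerivAt g d (A * n * s ^ (q / 2))) :
    HasDerivAt (fun x => invariantRate g A q a b V e x s)
      (a * b * s ^ (a * b - 1) * V * n ^ (a - 1 - 1)
          * ((a - 1) * g (A * n * s ^ (q / 2)) + A * n * s ^ (q / 2) * d)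
        - a * e * s ^ (a * b) * (a - 1) * n ^ (a - 1 - 1)) n := by
  have key := hasDerivAt_rpow_mul_comp_mul_rpow (p := a - 1) (m := 1) (c := A * s ^ (q / 2)) hn
    (by rwa [rpow_one, mul_right_comm])
  simp only [rpow_one, one_mul, mul_right_comm A (s ^ (q / 2))] at key
  have hmain := (key.const_mul (a * b * s ^ (a * b - 1) * V)).sub
    ((hasDerivAt_rpow_const (p := a - 1) (Or.inl hn.ne')).const_mul (a * e * s ^ (a * b)))
  refine (hmain.congr_deriv (by ring)).congr_of_eventuallyEq (.of_forall fun x => ?_)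
  simp only [invariantRate, Pi.sub_apply]
  ring

theorem hasDerivAt_invariantRate_snd (hs : 0 < s) (hg : HasDerivAt g d (A * n * s ^ (q / 2))) :
    HasDerivAt (fun x => invariantRate g A q a b V e n x)
      (a * b * n ^ (a - 1) * V * s ^ (a * b - 1 - 1)
          * ((a * b - 1) * g (A * n * s ^ (q / 2)) + q / 2 * (A * n * s ^ (q / 2)) * d)
        - a * e * n ^ (a - 1) * (a * b) * s ^ (a * b - 1)) s := by
  have key := hasDerivAt_rpow_mul_comp_mul_rpow (p := a * b - 1) (m := q / 2) (c := A * n) hs hg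
  have hmain := (key.const_mul (a * b * n ^ (a - 1) * V)).sub
    ((hasDerivAt_rpow_const (p := a * b) (Or.inl hs.ne')).const_mul (a * e * n ^ (a - 1)))
  refine (hmain.congr_deriv (by ring)).congr_of_eventuallyEq (.of_forall fun x => ?_)
  simp only [invariantRate, Pi.sub_apply]
  ring

theorem exists_pos_hasDerivAt_invariantRate_fst (hn : 0 < n) (hs : 0 < s) (ha₀ : 0 < a)
    (ha₁ : a < 1) (hb : 0 < b) (hV : 0 < V) (he : 0 ≤ e)
    (hg : HasDerivAt g d (A * n * s ^ (q / 2)))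
    (hel : 0 < (a - 1) * g (A * n * s ^ (q / 2)) + A * n * s ^ (q / 2) * d) :
    ∃ D, 0 < D ∧ HasDerivAt (fun x => invariantRate g A q a b V e x s) D n := by
  refine ⟨_, ?_, hasDerivAt_invariantRate_fst hn hg⟩
  have hgrowth := mul_pos (by positivity : 0 < a * b * s ^ (a * b - 1) * V * n ^ (a - 1 - 1)) hel
  have hloss : a * e * s ^ (a * b) * (a - 1) * n ^ (a - 1 - 1) ≤ 0 :=
    mul_nonpos_of_nonpos_of_nonneg
      (mul_nonpos_of_nonneg_of_nonpos (by positivity) (by linarith)) (by positivity)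
  linarith

theorem exists_neg_hasDerivAt_invariantRate_snd (hn : 0 < n) (hs : 0 < s) (ha : 0 < a)
    (hb : 0 < b) (hV : 0 < V) (he : 0 ≤ e) (hg : HasDerivAt g d (A * n * s ^ (q / 2)))
    (hel : (a * b - 1) * g (A * n * s ^ (q / 2)) + q / 2 * (A * n * s ^ (q / 2)) * d < 0) :
    ∃ D, D < 0 ∧ HasDerivAt (fun x => invariantRate g A q a b V e n x) D s := by
  refine ⟨_, ?_, hasDerivAt_invariantRate_snd hs hg⟩
  have hgrowth :=
    mul_neg_of_pos_of_neg (by positivity : 0 < a * b * n ^ (a - 1) * V * s ^ (a * b - 1 - 1)) hel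
  have hloss : 0 ≤ a * e * n ^ (a - 1) * (a * b) * s ^ (a * b - 1) := by positivity
  linarith

end invariantRate

theorem stmt14_general (g g' : ℝ → ℝ) (A q γlo γhi a b Vt et : ℝ)
    (hA : 0 < A) (hq1 : 1 < q)
    (hderiv : ∀ r ∈ Set.Ioi (0:ℝ), HasDerivAt g (g' r) r)
    (hgpos : ∀ r ∈ Set.Ioi (0:ℝ), 0 < g r)
    (hγle : γlo ≤ γhi) (hγhi : γhi < 1)
    (hγbound : ∀ r ∈ Set.Ioo (0:ℝ) 1,
      γlo ≤ r * g' r / g r ∧ r * g' r / g r ≤ γhi)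
    (hb : 0 < b)
    (ha1 : 1 - γlo < a) (ha2 : a < min ((1 - (q / 2) * γhi) / b) 1)
    (hV : 0 < Vt) (he : 0 ≤ et) :
    ∀ nn ss : ℝ, 0 < nn → 0 < ss → A * nn * ss ^ (q / 2) < 1 →
      (∃ D, 0 < D ∧ HasDerivAt
        (fun x => a * b * x ^ (a - 1) * ss ^ (a * b - 1) * g (A * x * ss ^ (q / 2)) * Vt
          - a * et * x ^ (a - 1) * ss ^ (a * b)) D nn)
      ∧ (∃ D, D < 0 ∧ HasDerivAt
        (fun x => a * b * nn ^ (a - 1) * x ^ (a * b - 1) * g (A * nn * x ^ (q / 2)) * Vt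
          - a * et * nn ^ (a - 1) * x ^ (a * b)) D ss) := by
  intro n s hn hs hr₁
  have hr₀ : 0 < A * n * s ^ (q / 2) := by positivity
  have hgr := hgpos _ hr₀
  obtain ⟨hlo, hhi⟩ := hγbound _ ⟨hr₀, hr₁⟩
  rw [le_div_iff₀ hgr] at hlo
  rw [div_le_iff₀ hgr] at hhi
  have ha_lt_one : a < 1 := ha2.trans_le (min_le_right _ _)
  have ha_pos : 0 < a := by linarith
  have hab : a * b < 1 - q / 2 * γhi := (lt_div_iff₀ hb).mp (ha2.trans_le (min_le_left _ _))
  refine ⟨exists_pos_hasDerivAt_invariantRate_fst hn hs ha_pos ha_lt_one hb hV he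
      (hderiv _ hr₀) ?_, exists_neg_hasDerivAt_invariantRate_snd hn hs ha_pos hb hV he
      (hderiv _ hr₀) ?_⟩
  · linarith [mul_pos (by linarith : 0 < a - 1 + γlo) hgr]
  · have hq : 0 ≤ q / 2 := by linarith
    linarith [mul_le_mul_of_nonneg_left hhi hq,
      mul_pos (by linarith : 0 < 1 - q / 2 * γhi - a * b) hgr]

/-- Monotone invariant combinations. With `(H2)`, `(H4)`
(`γ̲ ≤ r g'(r)/g(r) ≤ γ̄` on `(0,1)`), `0 < b < (1-(q/2)γ̄)/(1-γ̲)` and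
`1-γ̲ < a < min((1-(q/2)γ̄)/b, 1)`, the function
`y(n,s) = a b n^(a-1) s^(ab-1) g(A n s^(q/2)) V - a e n^(a-1) s^(ab)`
(the time derivative of `(n s^b)^a` with the control fixed) satisfies
`∂y/∂n > 0` and `∂y/∂s < 0` at every admissible `(n,s)`. -/
theorem stmt14 (g g' : ℝ → ℝ) (A q γlo γhi a b Vt et : ℝ)
    (hA : 0 < A) (hq1 : 1 < q) (hq2 : q < 2)
    (hderiv : ∀ r ∈ Set.Ioi (0:ℝ), HasDerivAt g (g' r) r)
    (hgpos : ∀ r ∈ Set.Ioi (0:ℝ), 0 < g r)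
    (hgconc : ConcaveOn ℝ (Set.Ici 0) g)
    (hg0 : g 0 = 0) (hg1 : g 1 = 1)
    (hγlo : 0 < γlo) (hγle : γlo ≤ γhi) (hγhi : γhi < 1)
    (hqγ : (q / 2) * γhi < 1)
    (hγbound : ∀ r ∈ Set.Ioo (0:ℝ) 1,
      γlo ≤ r * g' r / g r ∧ r * g' r / g r ≤ γhi)
    (hb : 0 < b) (hb2 : b < (1 - (q / 2) * γhi) / (1 - γlo))
    (ha1 : 1 - γlo < a) (ha2 : a < min ((1 - (q / 2) * γhi) / b) 1)
    (hV : 0 < Vt) (he : 0 ≤ et) :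
    ∀ nn ss : ℝ, 0 < nn → 0 < ss → A * nn * ss ^ (q / 2) < 1 →
      (∃ D, 0 < D ∧ HasDerivAt
        (fun x => a * b * x ^ (a - 1) * ss ^ (a * b - 1) * g (A * x * ss ^ (q / 2)) * Vt
          - a * et * x ^ (a - 1) * ss ^ (a * b)) D nn)
      ∧ (∃ D, D < 0 ∧ HasDerivAt
        (fun x => a * b * nn ^ (a - 1) * x ^ (a * b - 1) * g (A * nn * x ^ (q / 2)) * Vt
          - a * et * nn ^ (a - 1) * x ^ (a * b)) D ss) :=
  stmt14_general g g' A q γlo γhi a b Vt et hA hq1 hderiv hgpos hγle hγhi hγbound hb ha1 ha2 hV he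
end

section
/- (Pointwise optimality structure, low-convexity case.) Let P(s,t) = k s^α h₀(t) e^(-δt) with k > 0, α > 0, and δ_h(t) := δ − h₀'(t)/h₀(t). Define for y = n s^α the integrand factor z(y,s,t) = α s^(α−1) g(A y s^(q/2−α)) V(t) − δ_h(t) y. Assume (H2), (H4) with γ̲ ≤ γ(r) on (0,1), α < (1 − (q/2)γ̲)/(1 − γ̲), and δ_h(t) < α γ̲ ξ(t) where ξ(t) = s'(t)/s(t). Then ∂z/∂y > 0 and ∂z/∂s < 0 at every point along the trajectory. -/
/-!
Write `r = A n s^(q/2)` and `γ = r g'(r) / g(r)`. Differentiating in `y` gives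
`α V r g'(r) / (n s) - δ_h ≥ α γ̲ ξ - δ_h > 0`. Differentiating in `s` gives
`α V s^(α-2) ((α - 1) g(r) + (q/2 - α) r g'(r))`, and the bracket is `g(r)` times a function
of `γ` that is affine, so it is negative on `[γ̲, 1]` once it is negative at both endpoints:
at `γ = 1` because `q < 2`, at `γ = γ̲` because of the bound on `α`.
-/

open Real

lemma rpow_mul_rpow_sub_cancel {s : ℝ} (hs : 0 < s) (a b : ℝ) :
    s ^ a * s ^ (b - a) = s ^ b := by
  rw [← rpow_add hs, add_sub_cancel]

lemma rpow_sub_one_mul_rpow_sub {s : ℝ} (hs : 0 < s) (a b : ℝ) :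
    s ^ (a - 1) * s ^ (b - a) = s ^ b / s := by
  rw [rpow_sub_one hs.ne', div_mul_eq_mul_div, rpow_mul_rpow_sub_cancel hs]

lemma sub_one_mul_add_mul_neg {α p γlo G E : ℝ} (hp : p < 1) (hγlo1 : γlo < 1)
    (hα : α < (1 - p * γlo) / (1 - γlo)) (hG : 0 < G) (hlo : γlo * G ≤ E) (hhi : E ≤ G) :
    (α - 1) * G + (p - α) * E < 0 := by
  have hα' : α * (1 - γlo) < 1 - p * γlo := (lt_div_iff₀ (by linarith)).1 hα
  rcases le_or_gt α p with h | h
  · nlinarith [mul_le_mul_of_nonneg_left hhi (sub_nonneg.2 h)]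
  · nlinarith [mul_le_mul_of_nonpos_left hlo (sub_nonpos.2 h.le)]

lemma hasDerivAt_mul_comp_mul_sub {g : ℝ → ℝ} {g' a A b V δ y : ℝ}
    (hg : HasDerivAt g g' (A * y * b)) :
    HasDerivAt (fun y => a * g (A * y * b) * V - δ * y) (a * (g' * (A * b)) * V - δ) y := by
  have hlin : HasDerivAt (fun y => A * y * b) (A * b) y := by
    simpa using ((hasDerivAt_id y).const_mul A).mul_const b
  exact ((((hg.comp y hlin).const_mul a).mul_const V).sub
    ((hasDerivAt_id y).const_mul δ)).congr_deriv (by ring)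

lemma hasDerivAt_mul_rpow_mul_comp_rpow {g : ℝ → ℝ} {g' a c p β V K s : ℝ} (hs : 0 < s)
    (hg : HasDerivAt g g' (c * s ^ β)) :
    HasDerivAt (fun x => a * x ^ p * g (c * x ^ β) * V - K)
      (a * V * s ^ (p - 1) * (p * g (c * s ^ β) + β * (c * s ^ β * g'))) s := by
  have hpow : ∀ e, HasDerivAt (fun x : ℝ => x ^ e) (e * s ^ (e - 1)) s :=
    fun e => hasDerivAt_rpow_const (Or.inl hs.ne')
  have hinner := hg.comp s ((hpow β).const_mul c)
  refine ((((hpow p).const_mul a).mul hinner).mul_const V).sub_const K |>.congr_deriv ?_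
  rw [Function.comp_apply, rpow_sub_one hs.ne' β, rpow_sub_one hs.ne' p]
  field_simp

theorem stmt18_general (g g' : ℝ → ℝ) (A q α γlo δh Vt nn ss : ℝ)
    (hA : 0 < A) (hq2 : q < 2)
    (hgderiv : ∀ r ∈ Set.Ioi (0:ℝ), HasDerivAt g (g' r) r)
    (hgpos : ∀ r ∈ Set.Ioi (0:ℝ), 0 < g r)
    (hγlo1 : γlo < 1)
    (hγ : ∀ r ∈ Set.Ioo (0:ℝ) 1, γlo ≤ r * g' r / g r ∧ r * g' r / g r ≤ 1)
    (hα : 0 < α) (hαcond : α < (1 - (q / 2) * γlo) / (1 - γlo))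
    (hn : 0 < nn) (hs : 0 < ss) (hr : A * nn * ss ^ (q / 2) < 1)
    (hV : 0 < Vt)
    (hδ : δh < α * γlo * (g (A * nn * ss ^ (q / 2)) / nn * Vt / ss)) :
    (∃ D, 0 < D ∧ HasDerivAt
      (fun y => α * ss ^ (α - 1) * g (A * y * ss ^ (q / 2 - α)) * Vt - δh * y)
      D (nn * ss ^ α))
    ∧ (∃ D, D < 0 ∧ HasDerivAt
      (fun x => α * x ^ (α - 1) * g (A * (nn * ss ^ α) * x ^ (q / 2 - α)) * Vt
        - δh * (nn * ss ^ α)) D ss) := by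
  set r := A * nn * ss ^ (q / 2) with hr_def
  have hr_eq : A * (nn * ss ^ α) * ss ^ (q / 2 - α) = r := by
    rw [mul_assoc, mul_assoc, rpow_mul_rpow_sub_cancel hs, ← mul_assoc]
  have hr0 : 0 < r := by positivity
  have hgr : 0 < g r := hgpos r hr0
  have hg' : HasDerivAt g (g' r) (A * (nn * ss ^ α) * ss ^ (q / 2 - α)) :=
    hr_eq ▸ hgderiv r hr0
  obtain ⟨hγ_lo, hγ_hi⟩ := hγ r ⟨hr0, hr⟩
  have hlo : γlo * g r ≤ r * g' r := (le_div_iff₀ hgr).1 hγ_lo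
  have hhi : r * g' r ≤ g r := (div_le_one hgr).1 hγ_hi
  refine ⟨⟨_, ?_, hasDerivAt_mul_comp_mul_sub hg'⟩,
    ⟨_, ?_, hasDerivAt_mul_rpow_mul_comp_rpow hs hg'⟩⟩
  · calc 0 < α * γlo * (g r / nn * Vt / ss) - δh := sub_pos.2 hδ
      _ = α * Vt / (nn * ss) * (γlo * g r) - δh := by field_simp
      _ ≤ α * Vt / (nn * ss) * (r * g' r) - δh := by gcongr
      _ = α * Vt * A * g' r * (ss ^ (α - 1) * ss ^ (q / 2 - α)) - δh := by
        rw [rpow_sub_one_mul_rpow_sub hs, hr_def]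
        field_simp
      _ = α * ss ^ (α - 1) * (g' r * (A * ss ^ (q / 2 - α))) * Vt - δh := by ring
  · rw [hr_eq]
    refine mul_neg_of_pos_of_neg (by positivity) ?_
    exact sub_one_mul_add_mul_neg (by linarith) hγlo1 hαcond hgr hlo hhi

/-- Pointwise optimality structure, low-convexity case. With
`z(y,s,t) = α s^(α-1) g(A y s^(q/2-α)) V - δ_h y` (where `y = n s^α`), under (H2),
(H4) (`γ(r) ≥ γ̲` and `γ(r) ≤ 1` on `(0,1)`), `α < (1-(q/2)γ̲)/(1-γ̲)` and
`δ_h < α γ̲ ξ` with `ξ = s'/s = (g(r)/n)V/s`, one has `∂z/∂y > 0` and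
`∂z/∂s < 0` along the trajectory. -/
theorem stmt18 (g g' : ℝ → ℝ) (A q α γlo δh Vt nn ss : ℝ)
    (hA : 0 < A) (hq1 : 1 < q) (hq2 : q < 2)
    (hgderiv : ∀ r ∈ Set.Ioi (0:ℝ), HasDerivAt g (g' r) r)
    (hgpos : ∀ r ∈ Set.Ioi (0:ℝ), 0 < g r)
    (hgconc : ConcaveOn ℝ (Set.Ici 0) g)
    (hg0 : g 0 = 0) (hg1 : g 1 = 1)
    (hgr : ∀ r ∈ Set.Ioo (0:ℝ) 1, r ≤ g r)
    (hγlo : 0 < γlo) (hγlo1 : γlo < 1)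
    (hγ : ∀ r ∈ Set.Ioo (0:ℝ) 1, γlo ≤ r * g' r / g r ∧ r * g' r / g r ≤ 1)
    (hα : 0 < α) (hαcond : α < (1 - (q / 2) * γlo) / (1 - γlo))
    (hn : 0 < nn) (hs : 0 < ss) (hr : A * nn * ss ^ (q / 2) < 1)
    (hV : 0 < Vt)
    (hδ : δh < α * γlo * (g (A * nn * ss ^ (q / 2)) / nn * Vt / ss)) :
    (∃ D, 0 < D ∧ HasDerivAt
      (fun y => α * ss ^ (α - 1) * g (A * y * ss ^ (q / 2 - α)) * Vt - δh * y)
      D (nn * ss ^ α))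
    ∧ (∃ D, D < 0 ∧ HasDerivAt
      (fun x => α * x ^ (α - 1) * g (A * (nn * ss ^ α) * x ^ (q / 2 - α)) * Vt
        - δh * (nn * ss ^ α)) D ss) :=
  stmt18_general g g' A q α γlo δh Vt nn ss hA hq2 hgderiv hgpos hγlo1 hγ hα hαcond hn hs hr hV hδ
end
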